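/- For every n ≥ 4 there exists an acyclic USO of the n-cube that is not i-nice for any i < n−2; i.e., there is an AUSO with a vertex (the empty set) such that every vertex of Hamming weight at most n−3 has full reachmap [n], so ∅ can only be covered by a vertex at directed distance at least n−2. -/
import Mathlib


open Finset

/-- A directed step in the orientation given by outmap `s`:
from `v` along an outgoing coordinate `j`. -/
def USO.Step {n : ℕ} (s : Finset (Fin n) → Finset (Fin n))
    (v u : Finset (Fin n)) : Prop :=
  ∃ j, j ∈ s v ∧ u = symmDiff v {j}

/-- Reachability along directed paths. -/
def USO.Reach {n : ℕ} (s : Finset (Fin n) → Finset (Fin n)) :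
    Finset (Fin n) → Finset (Fin n) → Prop :=
  Relation.ReflTransGen (USO.Step s)

/-- Existence of a directed path of length exactly `k`. -/
def USO.StepN {n : ℕ} (s : Finset (Fin n) → Finset (Fin n)) :
    ℕ → Finset (Fin n) → Finset (Fin n) → Prop
  | 0, v, u => v = u
  | k + 1, v, u => ∃ w, USO.Step s v w ∧ USO.StepN s k w u

/-- `s` is (the outmap of) a unique sink orientation of the `n`-cube:
every face `F_{J,v} = {u : v ∆ u ⊆ J}` has a unique sink. -/
def IsUSO {n : ℕ} (s : Finset (Fin n) → Finset (Fin n)) : Prop :=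
  ∀ J v : Finset (Fin n), ∃! u, symmDiff v u ⊆ J ∧ s u ∩ J = ∅

/-- The reachmap of `v`: all coordinates outgoing at some vertex reachable from `v`. -/
def reachmap {n : ℕ} (s : Finset (Fin n) → Finset (Fin n))
    (v : Finset (Fin n)) : Set (Fin n) :=
  {j | ∃ u, USO.Reach s v u ∧ j ∈ s u}

/-- `s` is `i`-nice: every non-sink vertex has a directed path of length at most `i`
to a vertex of strictly smaller reachmap. -/
def IsNice {n : ℕ} (i : ℕ) (s : Finset (Fin n) → Finset (Fin n)) : Prop :=
  ∀ v, s v ≠ ∅ → ∃ u, (∃ k ≤ i, USO.StepN s k v u) ∧ reachmap s u ⊂ reachmap s v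

/-- Acyclicity of the orientation. -/
def IsAcyclic {n : ℕ} (s : Finset (Fin n) → Finset (Fin n)) : Prop :=
  ∀ v u, USO.Reach s v u → USO.Reach s u v → v = u

open scoped symmDiff

namespace NN

variable {n : ℕ}

/-- `p` is the chain-predecessor of `d`:  `pred 0 = n-1`, `pred d = d-1`. -/
def PredRel (n : ℕ) (p d : Fin n) : Prop :=
  (d.val = 0 ∧ p.val + 1 = n) ∨ p.val + 1 = d.val

/-- The reversed edges of the orientation, specified by the pair
(missing set `m` of one endpoint, direction `d`).  A vertex `v` participates
in the reversed `d`-edge iff `RevM vᶜ d`. -/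
def RevM (m : Finset (Fin n)) (d : Fin n) : Prop :=
  (d.val + 2 ≤ n ∧ ∃ p : Fin n, PredRel n p d ∧ (m = {p} ∨ m = {p, d})) ∨
  (d.val + 1 = n ∧ ∃ a b : Fin n, a.val + 2 ≤ b.val ∧ b.val + 2 ≤ n ∧
      (m = {a, b} ∨ m = {a, b, d}))

open scoped Classical in
/-- The outmap: all-up orientation with the edges of `RevM` reversed. -/
noncomputable def sFun (v : Finset (Fin n)) : Finset (Fin n) :=
  univ.filter fun j => if j ∈ v then RevM vᶜ j else ¬ RevM vᶜ j

lemma mem_sFun {v : Finset (Fin n)} {j : Fin n} :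
    j ∈ sFun v ↔ ((j ∈ v ∧ RevM vᶜ j) ∨ (j ∉ v ∧ ¬ RevM vᶜ j)) := by
  by_cases h : j ∈ v <;> simp [sFun, h]

/-! ### Basic facts about `PredRel` and `RevM` -/

lemma predRel_ne (hn : 4 ≤ n) {p d : Fin n} (h : PredRel n p d) : p ≠ d := by
  have := p.isLt
  rcases h with ⟨h0, hp⟩ | hs <;> (intro he; subst he; omega)

lemma predRel_inj_d (hn : 4 ≤ n) {p d d' : Fin n} (h : PredRel n p d)
    (h' : PredRel n p d') : d = d' := by
  have := d.isLt; have := d'.isLt; have := p.isLt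
  rcases h with h | h <;> rcases h' with h' | h' <;> (apply Fin.ext; omega)

lemma predRel_inj_p {p p' d : Fin n} (h : PredRel n p d)
    (h' : PredRel n p' d) : p = p' := by
  have := p.isLt; have := p'.isLt
  rcases h with h | h <;> rcases h' with h' | h' <;> (apply Fin.ext; omega)

lemma revM_card {m : Finset (Fin n)} {d : Fin n} (h : RevM m d) : m.card ≤ 3 := by
  rcases h with ⟨-, p, -, rfl | rfl⟩ | ⟨-, a, b, -, -, rfl | rfl⟩
  · simp
  · calc ({p, d} : Finset (Fin n)).card ≤ ({d} : Finset (Fin n)).card + 1 :=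
        card_insert_le _ _
      _ ≤ 3 := by simp
  · calc ({a, b} : Finset (Fin n)).card ≤ ({b} : Finset (Fin n)).card + 1 :=
        card_insert_le _ _
      _ ≤ 3 := by simp
  · calc ({a, b, d} : Finset (Fin n)).card ≤ ({b, d} : Finset (Fin n)).card + 1 :=
        card_insert_le _ _
      _ ≤ ({d} : Finset (Fin n)).card + 1 + 1 := by
          have := card_insert_le b ({d} : Finset (Fin n)); omega
      _ ≤ 3 := by simp

lemma not_revM_of_card {m : Finset (Fin n)} (h : 4 ≤ m.card) (d : Fin n) :
    ¬ RevM m d := fun hr => by have := revM_card hr; omega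

lemma card_triple {a b c : Fin n} (h1 : a ≠ b) (h2 : a ≠ c) (h3 : b ≠ c) :
    ({a, b, c} : Finset (Fin n)).card = 3 := by
  rw [card_insert_of_notMem (by simp [h1, h2]), card_pair h3]

/-- uniqueness of the reversed direction at a vertex -/
lemma revM_unique (hn : 4 ≤ n) {m : Finset (Fin n)} {d d' : Fin n}
    (h : RevM m d) (h' : RevM m d') : d = d' := by
  have hdlt := d.isLt; have hdlt' := d'.isLt
  rcases h with ⟨hd, p, hp, hm⟩ | ⟨hd, a, b, hab, hb, hm⟩ <;>
    rcases h' with ⟨hd', p', hp', hm'⟩ | ⟨hd', a', b', hab', hb', hm'⟩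
  · -- chain / chain
    have hpd := predRel_ne hn hp
    have hpd' := predRel_ne hn hp'
    rcases hm with rfl | rfl <;> rcases hm' with hm' | hm'
    · have hpp : p = p' := Finset.singleton_injective hm'
      subst hpp; exact predRel_inj_d hn hp hp'
    · exfalso
      have := congrArg Finset.card hm'
      rw [card_singleton, card_pair hpd'] at this; omega
    · exfalso
      have := congrArg Finset.card hm'
      rw [card_singleton, card_pair hpd] at this; omega
    · have hd'm : d' ∈ ({p, d} : Finset (Fin n)) := by rw [hm']; simp
      simp only [mem_insert, mem_singleton] at hd'm
      rcases hd'm with rfl | h1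
      · -- d' = p
        have hdm : d ∈ ({p', d'} : Finset (Fin n)) := by rw [← hm']; simp
        simp only [mem_insert, mem_singleton] at hdm
        rcases hdm with rfl | rfl
        · -- d = p'
          exfalso
          rcases hp with h1 | h1 <;> rcases hp' with h2 | h2 <;> omega
        · rfl
      · exact h1.symm
  · -- chain / g
    exfalso
    have hpd := predRel_ne hn hp
    have hab : a' ≠ b' := fun he => by rw [he] at hab'; omega
    have had : a' ≠ d' := fun he => by rw [he] at hab'; omega
    have hbd : b' ≠ d' := fun he => by rw [he] at hb'; omega
    rcases hm with rfl | rfl <;> rcases hm' with hm' | hm'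
    · have := congrArg Finset.card hm'
      rw [card_singleton, card_pair hab] at this; omega
    · have := congrArg Finset.card hm'
      rw [card_singleton, card_triple hab had hbd] at this; omega
    · have hdm : d ∈ ({a', b'} : Finset (Fin n)) := by rw [← hm']; simp
      have hpm : p ∈ ({a', b'} : Finset (Fin n)) := by rw [← hm']; simp
      simp only [mem_insert, mem_singleton] at hdm hpm
      rcases hdm with rfl | rfl <;> rcases hpm with rfl | rfl
      · exact hpd rfl
      · rcases hp with h1 | h1 <;> omega
      · rcases hp with h1 | h1 <;> omega
      · exact hpd rfl
    · have := congrArg Finset.card hm'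
      rw [card_pair hpd, card_triple hab had hbd] at this; omega
  · -- g / chain
    exfalso
    have hpd := predRel_ne hn hp'
    have hab : a ≠ b := fun he => by rw [he] at hab; omega
    have had : a ≠ d := fun he => by rw [he] at hab; omega
    have hbd : b ≠ d := fun he => by rw [he] at hb; omega
    rcases hm' with rfl | rfl <;> rcases hm with hm | hm
    · have := congrArg Finset.card hm
      rw [card_singleton, card_pair hab] at this; omega
    · have := congrArg Finset.card hm
      rw [card_singleton, card_triple hab had hbd] at this; omega
    · have hdm : d' ∈ ({a, b} : Finset (Fin n)) := by rw [← hm]; simp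
      have hpm : p' ∈ ({a, b} : Finset (Fin n)) := by rw [← hm]; simp
      simp only [mem_insert, mem_singleton] at hdm hpm
      rcases hdm with rfl | rfl <;> rcases hpm with rfl | rfl
      · exact hpd rfl
      · rcases hp' with h1 | h1 <;> omega
      · rcases hp' with h1 | h1 <;> omega
      · exact hpd rfl
    · have := congrArg Finset.card hm
      rw [card_pair hpd, card_triple hab had hbd] at this; omega
  · exact Fin.ext (by omega)

lemma symmDiff_singleton_of_not_mem {s : Finset (Fin n)} {a : Fin n} (h : a ∉ s) :
    s ∆ ({a} : Finset (Fin n)) = insert a s := by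
  ext x
  by_cases hx : x = a <;> simp [Finset.mem_symmDiff, hx, h]

lemma symmDiff_singleton_of_mem {s : Finset (Fin n)} {a : Fin n} (h : a ∈ s) :
    s ∆ ({a} : Finset (Fin n)) = s.erase a := by
  ext x
  by_cases hx : x = a <;>
    simp only [Finset.mem_symmDiff, Finset.mem_erase, Finset.mem_singleton, hx] <;> tauto

lemma pair_erase_left {a b : Fin n} (h : a ≠ b) :
    ({a, b} : Finset (Fin n)).erase a = {b} := by
  ext x; simp only [mem_erase, mem_insert, mem_singleton]
  constructor
  · rintro ⟨hxa, rfl | rfl⟩ <;> tauto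
  · rintro rfl; exact ⟨fun hh => h hh.symm, Or.inr rfl⟩

lemma pair_erase_right {a b : Fin n} (h : a ≠ b) :
    ({a, b} : Finset (Fin n)).erase b = {a} := by
  rw [Finset.pair_comm]; exact pair_erase_left h.symm

lemma triple_erase_last {a b c : Fin n} (ha : a ≠ c) (hb : b ≠ c) :
    ({a, b, c} : Finset (Fin n)).erase c = {a, b} := by
  ext x; simp only [mem_erase, mem_insert, mem_singleton]
  constructor
  · rintro ⟨hxc, rfl | rfl | rfl⟩ <;> tauto
  · rintro (rfl | rfl) <;> tauto

lemma insert_pair_rot {a b c : Fin n} :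
    (insert c ({a, b} : Finset (Fin n))) = {a, b, c} := by
  ext x; simp only [mem_insert, mem_singleton]; tauto

/-- participation transfers across the reversed edge -/
lemma revM_symmDiff (hn : 4 ≤ n) {m : Finset (Fin n)} {d : Fin n} (h : RevM m d) :
    RevM (m ∆ ({d} : Finset (Fin n))) d := by
  rcases h with ⟨hd, p, hp, rfl | rfl⟩ | ⟨hd, a, b, hab, hb, rfl | rfl⟩
  · have hpd : p ≠ d := predRel_ne hn hp
    rw [symmDiff_singleton_of_not_mem (by simp only [Finset.mem_singleton]; exact fun hh => hpd hh.symm)]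
    refine Or.inl ⟨hd, p, hp, Or.inr ?_⟩
    exact Finset.pair_comm d p
  · have hpd : p ≠ d := predRel_ne hn hp
    rw [symmDiff_singleton_of_mem (by simp)]
    rw [pair_erase_right hpd]
    exact Or.inl ⟨hd, p, hp, Or.inl rfl⟩
  · have hda : a ≠ d := by
      have := b.isLt; intro he; subst he; omega
    have hdb : b ≠ d := by intro he; subst he; omega
    rw [symmDiff_singleton_of_not_mem (by
      simp only [Finset.mem_insert, Finset.mem_singleton]
      rintro (h | h) <;> [exact hda h.symm; exact hdb h.symm])]
    rw [insert_pair_rot]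
    exact Or.inr ⟨hd, a, b, hab, hb, Or.inr rfl⟩
  · have hda : a ≠ d := by
      have := b.isLt; intro he; subst he; omega
    have hdb : b ≠ d := by intro he; subst he; omega
    rw [symmDiff_singleton_of_mem (by simp only [Finset.mem_insert, Finset.mem_singleton]; tauto)]
    rw [triple_erase_last hda hdb]
    exact Or.inr ⟨hd, a, b, hab, hb, Or.inl rfl⟩

/-! ### The USO property -/

lemma compl_symmDiff_singleton (v : Finset (Fin n)) (j : Fin n) :
    (v ∆ ({j} : Finset (Fin n)))ᶜ = vᶜ ∆ ({j} : Finset (Fin n)) := by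
  ext x
  by_cases hx : x = j <;>
    simp only [Finset.mem_symmDiff, Finset.mem_compl, Finset.mem_singleton, hx] <;> tauto

/-- participation transfers across the reversed edge, vertex form -/
lemma revM_step (hn : 4 ≤ n) {v : Finset (Fin n)} {j : Fin n} (h : RevM vᶜ j) :
    RevM (v ∆ ({j} : Finset (Fin n)))ᶜ j := by
  rw [compl_symmDiff_singleton]; exact revM_symmDiff hn h

lemma exists_three_distinct {T : Finset (Fin n)} (h3 : 3 ≤ T.card) :
    ∃ a b c, a ∈ T ∧ b ∈ T ∧ c ∈ T ∧ a ≠ b ∧ a ≠ c ∧ b ≠ c := by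
  obtain ⟨t, hts, htc⟩ := Finset.exists_subset_card_eq h3
  rw [Finset.card_eq_three] at htc
  obtain ⟨x, y, z, hxy, hxz, hyz, rfl⟩ := htc
  exact ⟨x, y, z, hts (by simp), hts (by simp), hts (by simp), hxy, hxz, hyz⟩

/-- the Szabó–Welzl criterion holds for `sFun` -/
lemma key_pair (hn : 4 ≤ n) {u w : Finset (Fin n)} (hne : u ≠ w) :
    ∃ x ∈ u ∆ w, (x ∈ sFun u ↔ x ∉ sFun w) := by
  classical
  set D := u ∆ w with hD
  have hDne : D ≠ ∅ := fun h => hne (symmDiff_eq_bot.mp h)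
  by_cases hgood : ∃ x ∈ D, ¬ RevM uᶜ x ∧ ¬ RevM wᶜ x
  · obtain ⟨x, hxD, hxu, hxw⟩ := hgood
    refine ⟨x, hxD, ?_⟩
    have hsu : x ∈ sFun u ↔ x ∉ u := by
      rw [mem_sFun]; constructor
      · rintro (⟨h1, h2⟩ | ⟨h1, h2⟩) <;> tauto
      · intro h1; exact Or.inr ⟨h1, hxu⟩
    have hsw : x ∈ sFun w ↔ x ∉ w := by
      rw [mem_sFun]; constructor
      · rintro (⟨h1, h2⟩ | ⟨h1, h2⟩) <;> tauto
      · intro h1; exact Or.inr ⟨h1, hxw⟩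
    rw [hsu, hsw]
    rw [hD, Finset.mem_symmDiff] at hxD
    tauto
  · push_neg at hgood
    -- every coordinate of D is a reversed direction at u or w
    have hcard : D.card ≤ 2 := by
      by_contra hc
      push_neg at hc
      obtain ⟨x, y, z, hx, hy, hz, hxy, hxz, hyz⟩ := exists_three_distinct (by omega : 3 ≤ D.card)
      have Hx := hgood x hx; have Hy := hgood y hy; have Hz := hgood z hz
      rcases Classical.em (RevM uᶜ x) with h1 | h1 <;>
      rcases Classical.em (RevM uᶜ y) with h2 | h2 <;>
      rcases Classical.em (RevM uᶜ z) with h3 | h3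
      · exact hxy (revM_unique hn h1 h2)
      · exact hxy (revM_unique hn h1 h2)
      · exact hxz (revM_unique hn h1 h3)
      · exact hyz (revM_unique hn (Hy h2) (Hz h3))
      · exact hyz (revM_unique hn h2 h3)
      · exact hxz (revM_unique hn (Hx h1) (Hz h3))
      · exact hxy (revM_unique hn (Hx h1) (Hy h2))
      · exact hxy (revM_unique hn (Hx h1) (Hy h2))
    interval_cases hDc : D.card
    · exact absurd (Finset.card_eq_zero.mp hDc) hDne
    · -- D = {j}
      obtain ⟨j, hDj⟩ := Finset.card_eq_one.mp hDc
      have hw : w = u ∆ ({j} : Finset (Fin n)) := by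
        have := symmDiff_symmDiff_cancel_left u w
        rw [← hD, hDj] at this
        exact this.symm
      have hRiff : RevM uᶜ j ↔ RevM wᶜ j := by
        constructor
        · intro h; rw [hw]; exact revM_step hn h
        · intro h
          have := revM_step hn h
          rw [hw, symmDiff_assoc, symmDiff_self, symmDiff_bot] at this
          exact this
      refine ⟨j, show j ∈ D by rw [hDj]; simp, ?_⟩
      have hjD : j ∈ D := by rw [hDj]; simp
      rw [hD, Finset.mem_symmDiff] at hjD
      rw [mem_sFun, mem_sFun]
      by_cases hR : RevM uᶜ j
      · have hRw := hRiff.mp hR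
        rcases hjD with ⟨hju, hjw⟩ | ⟨hjw, hju⟩ <;> tauto
      · have hRw : ¬ RevM wᶜ j := fun h => hR (hRiff.mpr h)
        rcases hjD with ⟨hju, hjw⟩ | ⟨hjw, hju⟩ <;> tauto
    · -- D.card = 2 : impossible
      exfalso
      obtain ⟨j, k, hjk, hDjk⟩ := Finset.card_eq_two.mp hDc
      have hw : w = u ∆ D := by
        have := symmDiff_symmDiff_cancel_left u w
        rw [← hD] at this
        exact this.symm
      have hj : j ∈ D := by rw [hDjk]; simp
      have hk : k ∈ D := by rw [hDjk]; simp
      have Hj := hgood j hj; have Hk := hgood k hk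
      have hDj : D ∆ ({j} : Finset (Fin n)) = {k} := by
        rw [hDjk, symmDiff_singleton_of_mem (by simp), pair_erase_left hjk]
      have hDk : D ∆ ({k} : Finset (Fin n)) = {j} := by
        rw [hDjk, symmDiff_singleton_of_mem (by simp), pair_erase_right hjk]
      have hwk : w ∆ ({k} : Finset (Fin n)) = u ∆ ({j} : Finset (Fin n)) := by
        rw [hw, symmDiff_assoc, hDk]
      have hwj : w ∆ ({j} : Finset (Fin n)) = u ∆ ({k} : Finset (Fin n)) := by
        rw [hw, symmDiff_assoc, hDj]
      rcases Classical.em (RevM uᶜ j) with h1 | h1 <;>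
        rcases Classical.em (RevM uᶜ k) with h2 | h2
      · exact hjk (revM_unique hn h1 h2)
      · -- RevM u j, RevM w k
        have h2' := Hk h2
        have a1 := revM_step hn h1
        have a2 := revM_step hn h2'
        rw [hwk] at a2
        exact hjk (revM_unique hn a1 a2)
      · have h1' := Hj h1
        have a1 := revM_step hn h1'
        have a2 := revM_step hn h2
        rw [hwj] at a1
        exact hjk (revM_unique hn a1 a2)
      · exact hjk (revM_unique hn (Hj h1) (Hk h2))

lemma isUSO (hn : 4 ≤ n) : IsUSO (sFun (n := n)) := by
  classical
  intro J v₀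
  set F : Finset (Finset (Fin n)) := J.powerset.image (fun A => v₀ ∆ A) with hF
  have hmemF : ∀ u, u ∈ F ↔ symmDiff v₀ u ⊆ J := by
    intro u
    rw [hF]
    simp only [Finset.mem_image, Finset.mem_powerset]
    constructor
    · rintro ⟨A, hA, rfl⟩
      rw [symmDiff_symmDiff_cancel_left]; exact hA
    · intro h
      exact ⟨v₀ ∆ u, h, by rw [symmDiff_symmDiff_cancel_left]⟩
  have hcardF : F.card = J.powerset.card :=
    Finset.card_image_of_injective _ (symmDiff_right_injective v₀)
  set φ : Finset (Fin n) → Finset (Fin n) := fun u => sFun u ∩ J with hφ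
  have hinj : Set.InjOn φ F := by
    intro u hu w hw hne'
    by_contra hne
    obtain ⟨x, hxD, hxiff⟩ := key_pair hn hne
    have hxJ : x ∈ J := by
      have h1 : symmDiff v₀ u ⊆ J := (hmemF u).mp hu
      have h2 : symmDiff v₀ w ⊆ J := (hmemF w).mp hw
      have : u ∆ w = (v₀ ∆ u) ∆ (v₀ ∆ w) := by
        rw [symmDiff_symmDiff_symmDiff_comm, symmDiff_self, bot_symmDiff]
      have hsub : u ∆ w ⊆ J := by
        rw [this]
        exact Finset.Subset.trans (le_of_le_of_eq symmDiff_le_sup rfl)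
          (Finset.union_subset h1 h2)
      exact hsub hxD
    have := congrArg (x ∈ ·) hne'
    simp only [hφ, Finset.mem_inter, eq_iff_iff] at this
    tauto
  have himg : F.image φ = J.powerset := by
    apply Finset.eq_of_subset_of_card_le
    · intro A hA
      simp only [Finset.mem_image] at hA
      obtain ⟨u, hu, rfl⟩ := hA
      simp only [Finset.mem_powerset, hφ]
      exact Finset.inter_subset_right
    · rw [Finset.card_image_of_injOn hinj, hcardF]
  have hempty : (∅ : Finset (Fin n)) ∈ F.image φ := by
    rw [himg]; exact Finset.empty_mem_powerset J
  simp only [Finset.mem_image] at hempty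
  obtain ⟨u, huF, hu0⟩ := hempty
  have hu0' : sFun u ∩ J = ∅ := hu0
  refine ⟨u, ⟨(hmemF u).mp huF, hu0'⟩, ?_⟩
  intro u' ⟨h1, h2⟩
  refine hinj ((hmemF u').mpr h1) huF ?_
  show sFun u' ∩ J = sFun u ∩ J
  rw [h2, hu0']

/-! ### Acyclicity via a potential function -/

open scoped Classical in
/-- stage of a missing set -/
noncomputable def stageM (n : ℕ) (m : Finset (Fin n)) : ℕ :=
  if h0 : m.card = 0 then 0
  else if h1 : m.card = 1 then
    (if ∃ j ∈ m, j.val + 1 = n then n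
     else n - 1 - (m.min' (Finset.card_pos.mp (by omega))).val)
  else if h2 : m.card = 2 then
    (if ∃ j ∈ m, j.val + 1 = n then (if ∃ j ∈ m, j.val = 0 then n - 1 else n)
     else if (m.max' (Finset.card_pos.mp (by omega))).val
            = (m.min' (Finset.card_pos.mp (by omega))).val + 1
          then n - 1 - (m.max' (Finset.card_pos.mp (by omega))).val
     else n + 1)
  else if m.card = 3 then (if ∃ d, RevM m d then n else n + 2)
  else n + 2

lemma stage_le_top (m : Finset (Fin n)) : stageM n m ≤ n + 2 := by
  unfold stageM
  split_ifs <;> omega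

lemma stage_empty : stageM n (∅ : Finset (Fin n)) = 0 := by
  unfold stageM; simp

lemma pair_min' {x y : Fin n} (h : x.val < y.val) (hne : ({x, y} : Finset (Fin n)).Nonempty) :
    ({x, y} : Finset (Fin n)).min' hne = x := by
  apply le_antisymm
  · exact Finset.min'_le _ _ (by simp)
  · apply Finset.le_min'
    intro y' hy'
    simp only [mem_insert, mem_singleton] at hy'
    rcases hy' with rfl | rfl
    · exact le_refl _
    · exact le_of_lt h

lemma pair_max' {x y : Fin n} (h : x.val < y.val) (hne : ({x, y} : Finset (Fin n)).Nonempty) :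
    ({x, y} : Finset (Fin n)).max' hne = y := by
  apply le_antisymm
  · apply Finset.max'_le
    intro y' hy'
    simp only [mem_insert, mem_singleton] at hy'
    rcases hy' with rfl | rfl
    · exact le_of_lt h
    · exact le_refl _
  · exact Finset.le_max' _ _ (by simp)

lemma stage_single (x : Fin n) :
    stageM n ({x} : Finset (Fin n)) = if x.val + 1 = n then n else n - 1 - x.val := by
  unfold stageM
  have h1 : ({x} : Finset (Fin n)).card = 1 := card_singleton x
  rw [dif_neg (by omega), dif_pos h1]
  by_cases hx : x.val + 1 = n
  · rw [if_pos ⟨x, by simp, hx⟩, if_pos hx]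
  · rw [if_neg (by simpa using hx), if_neg hx]
    simp

lemma stage_pair {x y : Fin n} (hxy : x.val < y.val) :
    stageM n ({x, y} : Finset (Fin n)) =
      if y.val + 1 = n then (if x.val = 0 then n - 1 else n)
      else if y.val = x.val + 1 then n - 1 - y.val else n + 1 := by
  have hne : x ≠ y := fun h => by rw [h] at hxy; omega
  have h2 : ({x, y} : Finset (Fin n)).card = 2 := card_pair hne
  have hy := y.isLt
  unfold stageM
  rw [dif_neg (by omega), dif_neg (by omega), dif_pos h2]
  have hLmem : (∃ j ∈ ({x, y} : Finset (Fin n)), j.val + 1 = n) ↔ y.val + 1 = n := by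
    constructor
    · rintro ⟨j, hj, hjv⟩
      simp only [mem_insert, mem_singleton] at hj
      rcases hj with rfl | rfl
      · omega
      · exact hjv
    · intro h; exact ⟨y, by simp, h⟩
  have h0mem : (∃ j ∈ ({x, y} : Finset (Fin n)), j.val = 0) ↔ x.val = 0 := by
    constructor
    · rintro ⟨j, hj, hjv⟩
      simp only [mem_insert, mem_singleton] at hj
      rcases hj with rfl | rfl
      · exact hjv
      · omega
    · intro h; exact ⟨x, by simp, h⟩
  rw [pair_min' hxy, pair_max' hxy]
  by_cases hL : y.val + 1 = n
  · rw [if_pos (hLmem.mpr hL), if_pos hL]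
    by_cases h0 : x.val = 0
    · rw [if_pos (h0mem.mpr h0), if_pos h0]
    · rw [if_neg (fun h => h0 (h0mem.mp h)), if_neg h0]
  · rw [if_neg (fun h => hL (hLmem.mp h)), if_neg hL]

open scoped Classical in
lemma stage_triple {m : Finset (Fin n)} (h3 : m.card = 3) :
    stageM n m = if ∃ d, RevM m d then n else n + 2 := by
  unfold stageM
  rw [dif_neg (by omega), dif_neg (by omega), dif_neg (by omega), if_pos h3]

lemma stage_big {m : Finset (Fin n)} (h4 : 4 ≤ m.card) : stageM n m = n + 2 := by
  unfold stageM
  rw [dif_neg (by omega), dif_neg (by omega), dif_neg (by omega), if_neg (by omega)]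

lemma triple_erase_first {a b c : Fin n} (h1 : a ≠ b) (h2 : a ≠ c) :
    ({a, b, c} : Finset (Fin n)).erase a = {b, c} := by
  ext x; simp only [mem_erase, mem_insert, mem_singleton]
  constructor
  · rintro ⟨hxa, rfl | rfl | rfl⟩ <;> tauto
  · rintro (rfl | rfl) <;> exact ⟨by tauto, by tauto⟩

lemma triple_erase_mid {a b c : Fin n} (h1 : b ≠ a) (h2 : b ≠ c) :
    ({a, b, c} : Finset (Fin n)).erase b = {a, c} := by
  ext x; simp only [mem_erase, mem_insert, mem_singleton]
  constructor
  · rintro ⟨hxa, rfl | rfl | rfl⟩ <;> tauto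
  · rintro (rfl | rfl) <;> exact ⟨by tauto, by tauto⟩

lemma stage_up_pair (hn : 4 ≤ n) {x y j : Fin n} (hxy : x.val < y.val)
    (hj : j ∈ ({x, y} : Finset (Fin n))) (hr : ¬ RevM ({x, y} : Finset (Fin n)) j) :
    stageM n (({x, y} : Finset (Fin n)).erase j) ≤ stageM n ({x, y} : Finset (Fin n)) := by
  have hxyne : x ≠ y := fun h => by rw [h] at hxy; omega
  have hylt := y.isLt
  simp only [mem_insert, mem_singleton] at hj
  rw [stage_pair hxy]
  by_cases hL : y.val + 1 = n
  · by_cases h0 : x.val = 0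
    · rw [if_pos hL, if_pos h0]
      rcases hj with rfl | rfl
      · -- j = x = 0 : this edge is reversed, contradiction
        exfalso
        apply hr
        refine Or.inl ⟨by omega, y, Or.inl ⟨h0, hL⟩, Or.inr ?_⟩
        exact Finset.pair_comm j y
      · rw [pair_erase_right hxyne, stage_single]
        rw [if_neg (by omega)]
        omega
    · rw [if_pos hL, if_neg h0]
      rcases hj with rfl | rfl
      · rw [pair_erase_left hxyne, stage_single, if_pos hL]
      · rw [pair_erase_right hxyne, stage_single, if_neg (by omega)]
        omega
  · by_cases hcons : y.val = x.val + 1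
    · rw [if_neg hL, if_pos hcons]
      rcases hj with rfl | rfl
      · rw [pair_erase_left hxyne, stage_single, if_neg (by omega)]
      · exfalso
        apply hr
        exact Or.inl ⟨by omega, x, Or.inr hcons.symm, Or.inr rfl⟩
    · rw [if_neg hL, if_neg hcons]
      rcases hj with rfl | rfl
      · rw [pair_erase_left hxyne, stage_single]
        split_ifs <;> omega
      · rw [pair_erase_right hxyne, stage_single]
        split_ifs <;> omega

/-- Going up along an unreversed edge does not increase the stage. -/
lemma stage_up (hn : 4 ≤ n) {m : Finset (Fin n)} {j : Fin n}
    (hj : j ∈ m) (hr : ¬ RevM m j) : stageM n (m.erase j) ≤ stageM n m := by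
  classical
  have hc1 : 1 ≤ m.card := Finset.card_pos.mpr ⟨j, hj⟩
  by_cases h1 : m.card = 1
  · obtain ⟨x, rfl⟩ := Finset.card_eq_one.mp h1
    simp only [mem_singleton] at hj
    subst hj
    rw [Finset.erase_singleton, stage_empty]
    omega
  · by_cases h2 : m.card = 2
    · obtain ⟨a, b, hab, rfl⟩ := Finset.card_eq_two.mp h2
      have : a.val ≠ b.val := fun h => hab (Fin.ext h)
      rcases Nat.lt_or_ge a.val b.val with hlt | hge
      · exact stage_up_pair hn hlt hj hr
      · have hlt : b.val < a.val := by omega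
        rw [Finset.pair_comm] at hj hr ⊢
        exact stage_up_pair hn hlt hj hr
    · by_cases h3 : m.card = 3
      · rw [stage_triple h3]
        by_cases hg : ∃ d, RevM m d
        · rw [if_pos hg]
          obtain ⟨d, hdR⟩ := hg
          rcases hdR with ⟨hd, p, hp, hm | hm⟩ | ⟨hd, a, b, hab, hb, hm | hm⟩
          · rw [hm] at h3; simp at h3
          · rw [hm, card_pair (predRel_ne hn hp)] at h3; omega
          · have : a ≠ b := fun h => by rw [h] at hab; omega
            rw [hm, card_pair this] at h3; omega
          · -- m = {a, b, d} : the g-bottom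
            have hdlt := d.isLt
            have hblt := b.isLt
            have habne : a ≠ b := fun h => by rw [h] at hab; omega
            have hadne : a ≠ d := fun h => by
              have : a.val = d.val := congrArg Fin.val h; omega
            have hbdne : b ≠ d := fun h => by
              have : b.val = d.val := congrArg Fin.val h; omega
            subst hm
            simp only [mem_insert, mem_singleton] at hj
            rcases hj with rfl | rfl | rfl
            · rw [triple_erase_first habne hadne]
              have hbd : b.val < d.val := by omega
              rw [stage_pair hbd, if_pos (by omega), if_neg (by omega)]
            · rw [triple_erase_mid (Ne.symm habne) hbdne]
              have had : a.val < d.val := by omega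
              rw [stage_pair had, if_pos (by omega)]
              split_ifs <;> omega
            · exfalso
              exact hr (Or.inr ⟨hd, a, b, hab, hb, Or.inr rfl⟩)
        · rw [if_neg hg]
          exact le_trans (stage_le_top _) (le_refl _)
      · have h4 : 4 ≤ m.card := by omega
        rw [stage_big h4]
        exact stage_le_top _

/-- Going down along a reversed edge strictly decreases the stage. -/
lemma stage_down (hn : 4 ≤ n) {m : Finset (Fin n)} {j : Fin n}
    (hj : j ∉ m) (hr : RevM m j) : stageM n (insert j m) < stageM n m := by
  rcases hr with ⟨hd, p, hp, hm | hm⟩ | ⟨hd, a, b, hab, hb, hm | hm⟩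
  · -- chain top : m = {p}
    subst hm
    have hplt := p.isLt
    rcases hp with ⟨hj0, hpL⟩ | hsucc
    · -- j = 0, p = n-1
      have hjp : j.val < p.val := by omega
      show stageM n ({j, p} : Finset (Fin n)) < _
      rw [stage_pair hjp, stage_single]
      have c1 : p.val + 1 = n := hpL
      rw [if_pos c1, if_pos c1, if_pos hj0]
      omega
    · -- p + 1 = j
      have hpj : p.val < j.val := by omega
      have h1 : (insert j ({p} : Finset (Fin n))) = {p, j} := Finset.pair_comm j p
      rw [h1, stage_pair hpj, stage_single]
      have c1 : ¬ (j.val + 1 = n) := by omega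
      have c2 : j.val = p.val + 1 := hsucc.symm
      have c3 : ¬ (p.val + 1 = n) := by omega
      rw [if_neg c1, if_pos c2, if_neg c3]
      omega
  · -- m = {p, j} contains j
    exfalso; rw [hm] at hj; simp at hj
  · -- g top : m = {a, b}
    subst hm
    have hblt := b.isLt
    have habv : a.val < b.val := by omega
    have h1 : (insert j ({a, b} : Finset (Fin n))) = {a, b, j} := insert_pair_rot
    have habne : a ≠ b := fun h => by rw [h] at hab; omega
    have hajne : a ≠ j := fun h => by
      have : a.val = j.val := congrArg Fin.val h; omega
    have hbjne : b ≠ j := fun h => by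
      have : b.val = j.val := congrArg Fin.val h; omega
    have h3 : ({a, b, j} : Finset (Fin n)).card = 3 := card_triple habne hajne hbjne
    rw [h1, stage_triple h3, stage_pair habv]
    have c0 : ∃ d, RevM ({a, b, j} : Finset (Fin n)) d :=
      ⟨j, Or.inr ⟨hd, a, b, hab, hb, Or.inr rfl⟩⟩
    have c1 : ¬ (b.val + 1 = n) := by omega
    have c2 : ¬ (b.val = a.val + 1) := by omega
    rw [if_pos c0, if_neg c1, if_neg c2]
    omega
  · exfalso; rw [hm] at hj; simp at hj

noncomputable def rho (v : Finset (Fin n)) : ℕ :=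
  2 * n * stageM n vᶜ + vᶜ.card

lemma step_rho (hn : 4 ≤ n) {v u : Finset (Fin n)} (h : USO.Step sFun v u) :
    rho u < rho v := by
  obtain ⟨j, hjs, rfl⟩ := h
  rw [mem_sFun] at hjs
  rcases hjs with ⟨hjv, hR⟩ | ⟨hjv, hR⟩
  · -- reversed (down) step
    have hjc : j ∉ vᶜ := by simp [hjv]
    have hcompl : (v ∆ ({j} : Finset (Fin n)))ᶜ = insert j vᶜ := by
      rw [compl_symmDiff_singleton, symmDiff_singleton_of_not_mem hjc]
    unfold rho
    rw [hcompl]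
    have hst := stage_down hn hjc hR
    have hc1 : (insert j vᶜ).card ≤ n := by
      have := Finset.card_le_univ (insert j vᶜ)
      simpa using this
    have hmul : 2 * n * (stageM n (insert j vᶜ) + 1) ≤ 2 * n * stageM n vᶜ :=
      Nat.mul_le_mul_left _ (by omega)
    have hci : (insert j vᶜ).card = vᶜ.card + 1 := card_insert_of_notMem hjc
    have hexp : 2 * n * (stageM n (insert j vᶜ) + 1)
        = 2 * n * stageM n (insert j vᶜ) + 2 * n := by ring
    omega
  · -- up step
    have hjc : j ∈ vᶜ := by simp [hjv]
    have hcompl : (v ∆ ({j} : Finset (Fin n)))ᶜ = vᶜ.erase j := by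
      rw [compl_symmDiff_singleton, symmDiff_singleton_of_mem hjc]
    unfold rho
    rw [hcompl]
    have hst := stage_up hn hjc hR
    have hc1 : 1 ≤ vᶜ.card := Finset.card_pos.mpr ⟨j, hjc⟩
    have hce : (vᶜ.erase j).card = vᶜ.card - 1 := Finset.card_erase_of_mem hjc
    have hmul : 2 * n * stageM n (vᶜ.erase j) ≤ 2 * n * stageM n vᶜ :=
      Nat.mul_le_mul_left _ hst
    omega

lemma reach_rho (hn : 4 ≤ n) {v u : Finset (Fin n)} (h : USO.Reach sFun v u) :
    rho u ≤ rho v := by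
  induction h with
  | refl => exact le_refl _
  | tail _ hstep ih => exact le_trans (le_of_lt (step_rho hn hstep)) ih

lemma isAcyclic (hn : 4 ≤ n) : IsAcyclic (sFun (n := n)) := by
  intro v u hvu huv
  rcases (Relation.ReflTransGen.cases_head hvu) with rfl | ⟨w, hstep, hreach⟩
  · rfl
  · exfalso
    have h1 : rho u ≤ rho w := reach_rho hn hreach
    have h2 : rho w < rho v := step_rho hn hstep
    have h3 : rho v ≤ rho u := reach_rho hn huv
    omega

/-! ### Reachability and full reachmaps -/

def fL (hn : 4 ≤ n) : Fin n := ⟨n - 1, by omega⟩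

@[simp] lemma fL_val (hn : 4 ≤ n) : (fL hn).val = n - 1 := rfl

def predF (hn : 4 ≤ n) (d : Fin n) : Fin n :=
  if d.val = 0 then fL hn else ⟨d.val - 1, lt_of_le_of_lt (Nat.sub_le _ _) d.isLt⟩

lemma predF_val_zero (hn : 4 ≤ n) {d : Fin n} (h : d.val = 0) :
    (predF hn d).val = n - 1 := by simp [predF, h]

lemma predF_val_pos (hn : 4 ≤ n) {d : Fin n} (h : d.val ≠ 0) :
    (predF hn d).val = d.val - 1 := by simp [predF, h]

lemma predF_spec (hn : 4 ≤ n) (d : Fin n) : PredRel n (predF hn d) d := by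
  by_cases h : d.val = 0
  · exact Or.inl ⟨h, by rw [predF_val_zero hn h]; omega⟩
  · exact Or.inr (by rw [predF_val_pos hn h]; omega)

lemma predF_ne (hn : 4 ≤ n) (d : Fin n) : predF hn d ≠ d :=
  predRel_ne hn (predF_spec hn d)

lemma step_up' (hn : 4 ≤ n) {m : Finset (Fin n)} {j : Fin n} (hj : j ∈ m)
    (hr : ¬ RevM m j) : USO.Step sFun mᶜ ((m.erase j)ᶜ) := by
  refine ⟨j, ?_, ?_⟩
  · rw [mem_sFun]
    refine Or.inr ⟨by simp [hj], ?_⟩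
    rw [compl_compl]; exact hr
  · rw [← symmDiff_singleton_of_mem hj, ← compl_symmDiff_singleton]

lemma step_down' (hn : 4 ≤ n) {m : Finset (Fin n)} {j : Fin n} (hj : j ∉ m)
    (hr : RevM m j) : USO.Step sFun mᶜ ((insert j m)ᶜ) := by
  refine ⟨j, ?_, ?_⟩
  · rw [mem_sFun]
    refine Or.inl ⟨by simp [hj], ?_⟩
    rw [compl_compl]; exact hr
  · rw [← symmDiff_singleton_of_not_mem hj, ← compl_symmDiff_singleton]

lemma climb_aux (hn : 4 ≤ n) (m' : Finset (Fin n)) (h3 : 3 ≤ m'.card) :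
    ∀ k : ℕ, ∀ m : Finset (Fin n), m' ⊆ m → (m \ m').card = k →
      USO.Reach sFun mᶜ m'ᶜ := by
  intro k
  induction k with
  | zero =>
    intro m hsub hd
    have hmm : m = m' := by
      apply Finset.Subset.antisymm _ hsub
      intro x hx
      by_contra hxm
      have hmem : x ∈ m \ m' := Finset.mem_sdiff.mpr ⟨hx, hxm⟩
      rw [Finset.card_eq_zero.mp hd] at hmem
      simp at hmem
    rw [hmm]
    exact Relation.ReflTransGen.refl
  | succ k ih =>
    intro m hsub hd
    have hne : (m \ m').Nonempty := by
      rw [← Finset.card_pos, hd]; omega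
    obtain ⟨j, hj⟩ := hne
    rw [Finset.mem_sdiff] at hj
    have h4 : 4 ≤ m.card := by
      have hss : m' ⊂ m := ⟨hsub, fun h => hj.2 (h hj.1)⟩
      have := Finset.card_lt_card hss
      omega
    have hstep := step_up' hn hj.1 (not_revM_of_card h4 j)
    have hsub2 : m' ⊆ m.erase j := fun x hx =>
      Finset.mem_erase.mpr ⟨fun he => hj.2 (he ▸ hx), hsub hx⟩
    have hsd : (m.erase j) \ m' = (m \ m').erase j := by
      ext x; simp only [Finset.mem_erase, Finset.mem_sdiff]; tauto
    have hcd : ((m.erase j) \ m').card = k := by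
      rw [hsd, Finset.card_erase_of_mem (Finset.mem_sdiff.mpr hj)]
      omega
    exact Relation.ReflTransGen.head hstep (ih (m.erase j) hsub2 hcd)

lemma climb' (hn : 4 ≤ n) {v m' : Finset (Fin n)} (hsub : m' ⊆ vᶜ)
    (h3 : 3 ≤ m'.card) : USO.Reach sFun v (m'ᶜ) := by
  have := climb_aux hn m' h3 ((vᶜ \ m').card) vᶜ hsub rfl
  rwa [compl_compl] at this

lemma pair_eq_pair {a b c d : Fin n} (hab : a ≠ b) (h : ({a, b} : Finset (Fin n)) = {c, d}) :
    (a = c ∧ b = d) ∨ (a = d ∧ b = c) := by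
  have ha : a ∈ ({c, d} : Finset (Fin n)) := by rw [← h]; simp
  have hb : b ∈ ({c, d} : Finset (Fin n)) := by rw [← h]; simp
  have hc : c ∈ ({a, b} : Finset (Fin n)) := by rw [h]; simp
  have hd' : d ∈ ({a, b} : Finset (Fin n)) := by rw [h]; simp
  simp only [mem_insert, mem_singleton] at ha hb hc hd'
  rcases ha with rfl | rfl <;> rcases hb with rfl | rfl <;> tauto

lemma not_revM_card3 (hn : 4 ≤ n) {m : Finset (Fin n)} (h3 : m.card = 3)
    {j : Fin n} (hj : j.val + 1 ≠ n) : ¬ RevM m j := by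
  rintro (⟨hd, p, hp, rfl | rfl⟩ | ⟨hd, a, b, hab, hb, hm⟩)
  · simp at h3
  · rw [card_pair (predRel_ne hn hp)] at h3; omega
  · exact hj hd

/-- the up-edge from `{fL, z}` removing `z` is not reversed (`z ≠ 0`, `z` not last) -/
lemma not_revM_pairL (hn : 4 ≤ n) {z : Fin n} (hz0 : z.val ≠ 0) (hzL : z.val + 1 ≠ n) :
    ¬ RevM ({fL hn, z} : Finset (Fin n)) z := by
  have hLz : fL hn ≠ z := fun h => hzL (by rw [← h]; simp [fL_val]; omega)
  rintro (⟨hd, p, hp, hm | hm⟩ | ⟨hd, a, b, hab, hb, hm⟩)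
  · have := congrArg Finset.card hm
    rw [card_pair hLz, card_singleton] at this; omega
  · rcases pair_eq_pair hLz hm with ⟨h1, h2⟩ | ⟨h1, h2⟩
    · -- fL = p, z = z :  PredRel fL z
      rcases hp with ⟨hzv, hpv⟩ | hpv
      · exact hz0 hzv
      · rw [← h1] at hpv
        have := z.isLt
        simp [fL_val] at hpv
        omega
    · exact hLz h1
  · exact hzL hd

/-- the up-edge from `{b, fL}` removing `fL` is never reversed -/
lemma not_revM_pair_at_L (hn : 4 ≤ n) {b c : Fin n} (hbc : b ≠ c) (hc : c.val + 1 = n) :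
    ¬ RevM ({b, c} : Finset (Fin n)) c := by
  rintro (⟨hd, p, hp, hm⟩ | ⟨hd, a', b', hab, hb, hm | hm⟩)
  · omega
  · rcases pair_eq_pair hbc hm with ⟨h1, h2⟩ | ⟨h1, h2⟩
    · have : c.val = b'.val := congrArg Fin.val h2; omega
    · have : c.val = a'.val := congrArg Fin.val h2
      have := b'.isLt; omega
  · have := congrArg Finset.card hm
    have haj : a' ≠ c := fun h => by
      have : a'.val = c.val := congrArg Fin.val h; omega
    have hbj : b' ≠ c := fun h => by
      have : b'.val = c.val := congrArg Fin.val h; omega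
    have habne : a' ≠ b' := fun h => by
      have : a'.val = b'.val := congrArg Fin.val h; omega
    rw [card_pair hbc, card_triple habne haj hbj] at this
    omega

lemma exists_three_ordered {T : Finset (Fin n)} (h3 : 3 ≤ T.card) :
    ∃ a b c, a ∈ T ∧ b ∈ T ∧ c ∈ T ∧ a.val < b.val ∧ b.val < c.val := by
  obtain ⟨x, y, z, hx, hy, hz, hxy, hxz, hyz⟩ := exists_three_distinct h3
  have h1 : x.val ≠ y.val := fun h => hxy (Fin.ext h)
  have h2 : x.val ≠ z.val := fun h => hxz (Fin.ext h)
  have h3' : y.val ≠ z.val := fun h => hyz (Fin.ext h)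
  rcases Nat.lt_trichotomy x.val y.val with a1 | a1 | a1 <;>
    rcases Nat.lt_trichotomy y.val z.val with a2 | a2 | a2 <;>
      first
        | exact ⟨x, y, z, hx, hy, hz, by omega, by omega⟩
        | exact ⟨x, z, y, hx, hz, hy, by omega, by omega⟩
        | exact ⟨y, x, z, hy, hx, hz, by omega, by omega⟩
        | exact ⟨y, z, x, hy, hz, hx, by omega, by omega⟩
        | exact ⟨z, x, y, hz, hx, hy, by omega, by omega⟩
        | exact ⟨z, y, x, hz, hy, hx, by omega, by omega⟩
        | omega
        | (rcases Nat.lt_trichotomy x.val z.val with a3 | a3 | a3 <;>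
            first
              | exact ⟨x, y, z, hx, hy, hz, by omega, by omega⟩
              | exact ⟨x, z, y, hx, hz, hy, by omega, by omega⟩
              | exact ⟨y, x, z, hy, hx, hz, by omega, by omega⟩
              | exact ⟨y, z, x, hy, hz, hx, by omega, by omega⟩
              | exact ⟨z, x, y, hz, hx, hy, by omega, by omega⟩
              | exact ⟨z, y, x, hz, hy, hx, by omega, by omega⟩
              | omega)

lemma exists_val_ne_zero {T : Finset (Fin n)} (h2 : 2 ≤ T.card) :
    ∃ z ∈ T, z.val ≠ 0 := by
  obtain ⟨x, hx, y, hy, hxy⟩ := Finset.one_lt_card.mp (show 1 < T.card by omega)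
  by_cases hx0 : x.val = 0
  · refine ⟨y, hy, fun hy0 => hxy ?_⟩
    apply Fin.ext
    omega
  · exact ⟨x, hx, hx0⟩

/-- climbing from one chain top to the next -/
lemma chain_step (hn : 4 ≤ n) {c' c : Fin n} (hcc : c'.val + 1 = c.val)
    (hc : c.val + 2 ≤ n) :
    USO.Reach sFun (({predF hn c'} : Finset (Fin n))ᶜ)
      (({predF hn c} : Finset (Fin n))ᶜ) := by
  set p := predF hn c' with hpdef
  have hps : PredRel n p c' := predF_spec hn c'
  have hpne : p ≠ c' := predF_ne hn c'
  have hc2 : c'.val + 2 ≤ n := by omega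
  have hs1 : USO.Step sFun ({p} : Finset (Fin n))ᶜ ((insert c' {p})ᶜ) :=
    step_down' hn (by simp only [Finset.mem_singleton]; exact fun h => hpne h.symm)
      (Or.inl ⟨hc2, p, hps, Or.inl rfl⟩)
  have he : insert c' ({p} : Finset (Fin n)) = {p, c'} := Finset.pair_comm c' p
  have hnr : ¬ RevM ({p, c'} : Finset (Fin n)) p := by
    rintro (⟨hd, q, hq, hm | hm⟩ | ⟨hd, a, b, hab, hb, hm | hm⟩)
    · have := congrArg Finset.card hm
      rw [card_pair hpne, card_singleton] at this; omega
    · rcases pair_eq_pair hpne hm with ⟨h1, h2⟩ | ⟨h1, h2⟩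
      · exact hpne h2.symm
      · -- p = p (h2 : c' = q), PredRel c' p with hd : p.val + 2 ≤ n
        rw [← h2] at hq
        rcases hq with ⟨hpv, hcv⟩ | hcv
        · omega
        · -- c'.val + 1 = p.val
          by_cases hz : c'.val = 0
          · have := predF_val_zero hn hz; omega
          · have := predF_val_pos hn hz; omega
    · -- g with d = p : p.val + 1 = n
      have hpv : p.val + 1 = n := hd
      rcases pair_eq_pair hpne hm with ⟨h1, h2⟩ | ⟨h1, h2⟩
      · have : p.val = a.val := congrArg Fin.val h1
        have := b.isLt; omega
      · have : p.val = b.val := congrArg Fin.val h1; omega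
    · have := congrArg Finset.card hm
      have hav := a.isLt
      have habne : a ≠ b := fun h => by
        have : a.val = b.val := congrArg Fin.val h; omega
      have hap : a ≠ p := fun h => by
        have : a.val = p.val := congrArg Fin.val h; omega
      have hbp : b ≠ p := fun h => by
        have : b.val = p.val := congrArg Fin.val h; omega
      rw [card_pair hpne, card_triple habne hap hbp] at this
      omega
  have hs2 : USO.Step sFun (({p, c'} : Finset (Fin n))ᶜ)
      ((({p, c'} : Finset (Fin n)).erase p)ᶜ) :=
    step_up' hn (by simp) hnr
  have he2 : ({p, c'} : Finset (Fin n)).erase p = {c'} := pair_erase_left hpne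
  have hpc : predF hn c = c' := by
    apply Fin.ext
    rw [predF_val_pos hn (by omega)]
    omega
  rw [he] at hs1
  rw [he2] at hs2
  rw [hpc]
  exact Relation.ReflTransGen.head hs1 (Relation.ReflTransGen.single hs2)

/-- reaching the bottom chain top `{pred 0}ᶜ = {n-1}ᶜ` -/
lemma reach_t0 (hn : 4 ≤ n) {v : Finset (Fin n)} (h3 : 3 ≤ vᶜ.card) :
    USO.Reach sFun v (({fL hn} : Finset (Fin n))ᶜ) := by
  by_cases hLm : fL hn ∈ vᶜ
  · -- climb directly
    set m2 := vᶜ.erase (fL hn) with hm2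
    have hm2c : 2 ≤ m2.card := by
      rw [hm2, Finset.card_erase_of_mem hLm]; omega
    obtain ⟨z, hz, hz0⟩ := exists_val_ne_zero hm2c
    have hzL : z ≠ fL hn := by
      rw [hm2] at hz; exact (Finset.mem_erase.mp hz).1
    have hzv : z ∈ vᶜ := by rw [hm2] at hz; exact (Finset.mem_erase.mp hz).2
    have hm3c : 1 ≤ (m2.erase z).card := by
      rw [Finset.card_erase_of_mem hz]; omega
    obtain ⟨y, hy⟩ := Finset.card_pos.mp (show 0 < (m2.erase z).card by omega)
    have hyz : y ≠ z := (Finset.mem_erase.mp hy).1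
    have hyL : y ≠ fL hn := by
      have := (Finset.mem_erase.mp hy).2
      rw [hm2] at this
      exact (Finset.mem_erase.mp this).1
    have hyv : y ∈ vᶜ := by
      have := (Finset.mem_erase.mp hy).2
      rw [hm2] at this
      exact (Finset.mem_erase.mp this).2
    -- the triple {fL, y, z}
    have hsub : ({fL hn, y, z} : Finset (Fin n)) ⊆ vᶜ := by
      intro t ht
      simp only [mem_insert, mem_singleton] at ht
      rcases ht with rfl | rfl | rfl <;> assumption
    have hcard3 : ({fL hn, y, z} : Finset (Fin n)).card = 3 :=
      card_triple (Ne.symm hyL) (Ne.symm hzL) hyz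
    have hr1 : USO.Reach sFun v (({fL hn, y, z} : Finset (Fin n))ᶜ) :=
      climb' hn hsub (by omega)
    have hyL' : y.val + 1 ≠ n := fun h => hyL (by apply Fin.ext; rw [fL_val]; omega)
    have hs1 : USO.Step sFun (({fL hn, y, z} : Finset (Fin n))ᶜ)
        ((({fL hn, y, z} : Finset (Fin n)).erase y)ᶜ) :=
      step_up' hn (by simp) (not_revM_card3 hn hcard3 hyL')
    have he1 : ({fL hn, y, z} : Finset (Fin n)).erase y = {fL hn, z} :=
      triple_erase_mid hyL hyz
    have hzL' : z.val + 1 ≠ n := fun h => hzL (by apply Fin.ext; rw [fL_val]; omega)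
    have hs2 : USO.Step sFun (({fL hn, z} : Finset (Fin n))ᶜ)
        ((({fL hn, z} : Finset (Fin n)).erase z)ᶜ) :=
      step_up' hn (by simp) (not_revM_pairL hn hz0 hzL')
    have he2 : ({fL hn, z} : Finset (Fin n)).erase z = {fL hn} :=
      pair_erase_right (Ne.symm hzL)
    rw [he1] at hs1
    rw [he2] at hs2
    exact (hr1.tail hs1).tail hs2
  · -- g-route : fL ∈ v
    obtain ⟨a, w, b, ha, hw, hb, haw, hwb⟩ := exists_three_ordered h3
    have hbL : b ≠ fL hn := fun h => hLm (h ▸ hb)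
    have hbn : b.val + 2 ≤ n := by
      have := b.isLt
      have : b.val ≠ n - 1 := fun h => hbL (Fin.ext (by simp [fL_val, h]))
      omega
    have hab2 : a.val + 2 ≤ b.val := by omega
    have hwa : w ≠ a := fun h => by
      have : w.val = a.val := congrArg Fin.val h; omega
    have hwb' : w ≠ b := fun h => by
      have : w.val = b.val := congrArg Fin.val h; omega
    have habne : a ≠ b := fun h => by
      have : a.val = b.val := congrArg Fin.val h; omega
    have hsub : ({a, b, w} : Finset (Fin n)) ⊆ vᶜ := by
      intro t ht
      simp only [mem_insert, mem_singleton] at ht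
      rcases ht with rfl | rfl | rfl <;> assumption
    have hcard3 : ({a, b, w} : Finset (Fin n)).card = 3 :=
      card_triple habne (Ne.symm hwa) (Ne.symm hwb')
    have hr1 : USO.Reach sFun v (({a, b, w} : Finset (Fin n))ᶜ) :=
      climb' hn hsub (by omega)
    have hwL' : w.val + 1 ≠ n := by
      have := b.isLt; omega
    have hs1 : USO.Step sFun (({a, b, w} : Finset (Fin n))ᶜ)
        ((({a, b, w} : Finset (Fin n)).erase w)ᶜ) :=
      step_up' hn (by simp) (not_revM_card3 hn hcard3 hwL')
    have he1 : ({a, b, w} : Finset (Fin n)).erase w = {a, b} :=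
      triple_erase_last (Ne.symm hwa) (Ne.symm hwb')
    have hLab : fL hn ∉ ({a, b} : Finset (Fin n)) := by
      simp only [mem_insert, mem_singleton]
      rintro (rfl | rfl)
      · simp [fL_val] at hab2; omega
      · simp [fL_val] at hbn; omega
    have hs2 : USO.Step sFun (({a, b} : Finset (Fin n))ᶜ)
        ((insert (fL hn) {a, b} : Finset (Fin n))ᶜ) :=
      step_down' hn hLab (Or.inr ⟨by simp [fL_val]; omega, a, b, hab2, hbn, Or.inl rfl⟩)
    have he2 : (insert (fL hn) ({a, b} : Finset (Fin n))) = {a, b, fL hn} :=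
      insert_pair_rot
    have haL : a ≠ fL hn := fun h => by
      have : a.val = n - 1 := congrArg Fin.val h; omega
    have hbL' : b ≠ fL hn := hbL
    have hcard3' : ({a, b, fL hn} : Finset (Fin n)).card = 3 :=
      card_triple habne haL hbL'
    have hs3 : USO.Step sFun (({a, b, fL hn} : Finset (Fin n))ᶜ)
        ((({a, b, fL hn} : Finset (Fin n)).erase a)ᶜ) :=
      step_up' hn (by simp)
        (not_revM_card3 hn hcard3' (by
          have := b.isLt; omega))
    have he3 : ({a, b, fL hn} : Finset (Fin n)).erase a = {b, fL hn} :=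
      triple_erase_first habne haL
    have hs4 : USO.Step sFun (({b, fL hn} : Finset (Fin n))ᶜ)
        ((({b, fL hn} : Finset (Fin n)).erase b)ᶜ) :=
      step_up' hn (by simp) (by
        have hswap : ({b, fL hn} : Finset (Fin n)) = {fL hn, b} := Finset.pair_comm b (fL hn)
        rw [hswap]
        exact not_revM_pairL hn (by omega) (by have := b.isLt; omega))
    have he4 : ({b, fL hn} : Finset (Fin n)).erase b = {fL hn} :=
      pair_erase_left hbL'
    rw [he1] at hs1
    rw [he2] at hs2
    rw [he3] at hs3
    rw [he4] at hs4
    exact (((hr1.tail hs1).tail hs2).tail hs3).tail hs4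

/-- reaching any chain top -/
lemma reach_top (hn : 4 ≤ n) {v : Finset (Fin n)} (h3 : 3 ≤ vᶜ.card) :
    ∀ k : ℕ, ∀ c : Fin n, c.val = k → c.val + 2 ≤ n →
      USO.Reach sFun v (({predF hn c} : Finset (Fin n))ᶜ) := by
  intro k
  induction k with
  | zero =>
    intro c hc0 hc
    have hp : predF hn c = fL hn := Fin.ext (by rw [predF_val_zero hn hc0]; simp [fL_val])
    rw [hp]
    exact reach_t0 hn h3
  | succ k ih =>
    intro c hck hc
    have hk : k < n := by omega
    have hk2 : (⟨k, hk⟩ : Fin n).val + 2 ≤ n := by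
      show k + 2 ≤ n
      omega
    have hr1 := ih ⟨k, hk⟩ rfl hk2
    have hcc : (⟨k, hk⟩ : Fin n).val + 1 = c.val := by
      show k + 1 = c.val
      omega
    exact hr1.trans (chain_step hn hcc hc)

/-- full coverage: from any low vertex, every coordinate is outgoing somewhere reachable -/
lemma cover (hn : 4 ≤ n) {v : Finset (Fin n)} (h3 : 3 ≤ vᶜ.card) (c : Fin n) :
    ∃ u, USO.Reach sFun v u ∧ c ∈ sFun u := by
  by_cases hcm : c ∈ vᶜ
  · by_cases hR : RevM vᶜ c
    · -- v is a g-bottom and c = fL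
      rcases hR with ⟨hd, p, hp, hm | hm⟩ | ⟨hd, a, b, hab, hb, hm | hm⟩
      · rw [hm, card_singleton] at h3; omega
      · rw [hm, card_pair (predRel_ne hn hp)] at h3; omega
      · rw [hm] at h3
        have : a ≠ b := fun h => by
          have : a.val = b.val := congrArg Fin.val h; omega
        rw [card_pair this] at h3; omega
      · -- vᶜ = {a, b, c} with c.val + 1 = n
        have hav := a.isLt
        have habne : a ≠ b := fun h => by
          have : a.val = b.val := congrArg Fin.val h; omega
        have hac : a ≠ c := fun h => by
          have : a.val = c.val := congrArg Fin.val h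
          have := b.isLt; omega
        have hbc : b ≠ c := fun h => by
          have : b.val = c.val := congrArg Fin.val h; omega
        have hcard3 : (vᶜ).card = 3 := by rw [hm]; exact card_triple habne hac hbc
        have hs1 : USO.Step sFun ((vᶜ)ᶜ) (((vᶜ).erase a)ᶜ) :=
          step_up' hn (by rw [hm]; simp)
            (by rw [hm]; exact not_revM_card3 hn (hm ▸ hcard3) (by omega))
        have he1 : (vᶜ).erase a = {b, c} := by
          rw [hm]; exact triple_erase_first habne hac
        rw [compl_compl, he1] at hs1
        refine ⟨({b, c} : Finset (Fin n))ᶜ, Relation.ReflTransGen.single hs1, ?_⟩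
        rw [mem_sFun]
        refine Or.inr ⟨by simp, ?_⟩
        rw [compl_compl]
        exact not_revM_pair_at_L hn hbc hd
    · -- c is outgoing at v itself
      exact ⟨v, Relation.ReflTransGen.refl,
        mem_sFun.mpr (Or.inr ⟨Finset.mem_compl.mp hcm, hR⟩)⟩
  · -- c ∈ v
    have hcv : c ∈ v := by
      by_contra h
      exact hcm (Finset.mem_compl.mpr h)
    by_cases hcL : c.val + 2 ≤ n
    · -- a chain coordinate : go to its chain top
      refine ⟨({predF hn c} : Finset (Fin n))ᶜ, reach_top hn h3 c.val c rfl hcL, ?_⟩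
      rw [mem_sFun]
      refine Or.inl ⟨?_, ?_⟩
      · rw [Finset.mem_compl, Finset.mem_singleton]
        exact fun h => predF_ne hn c (h.symm)
      · rw [compl_compl]
        exact Or.inl ⟨hcL, predF hn c, predF_spec hn c, Or.inl rfl⟩
    · -- c = fL : go to a g-top
      have hcL' : c.val + 1 = n := by have := c.isLt; omega
      obtain ⟨a, w, b, ha, hw, hb, haw, hwb⟩ := exists_three_ordered h3
      have hbc : b ≠ c := fun h => hcm (h ▸ hb)
      have hbn : b.val + 2 ≤ n := by
        have := b.isLt
        have : b.val ≠ n - 1 := fun h => hbc (Fin.ext (by omega))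
        omega
      have hab2 : a.val + 2 ≤ b.val := by omega
      have hwa : w ≠ a := fun h => by
        have : w.val = a.val := congrArg Fin.val h; omega
      have hwb' : w ≠ b := fun h => by
        have : w.val = b.val := congrArg Fin.val h; omega
      have habne : a ≠ b := fun h => by
        have : a.val = b.val := congrArg Fin.val h; omega
      have hsub : ({a, b, w} : Finset (Fin n)) ⊆ vᶜ := by
        intro t ht
        simp only [mem_insert, mem_singleton] at ht
        rcases ht with rfl | rfl | rfl <;> assumption
      have hcard3 : ({a, b, w} : Finset (Fin n)).card = 3 :=
        card_triple habne (Ne.symm hwa) (Ne.symm hwb')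
      have hr1 : USO.Reach sFun v (({a, b, w} : Finset (Fin n))ᶜ) :=
        climb' hn hsub (by omega)
      have hs1 : USO.Step sFun (({a, b, w} : Finset (Fin n))ᶜ)
          ((({a, b, w} : Finset (Fin n)).erase w)ᶜ) :=
        step_up' hn (by simp)
          (not_revM_card3 hn hcard3 (by have := b.isLt; omega))
      have he1 : ({a, b, w} : Finset (Fin n)).erase w = {a, b} :=
        triple_erase_last (Ne.symm hwa) (Ne.symm hwb')
      rw [he1] at hs1
      refine ⟨({a, b} : Finset (Fin n))ᶜ, hr1.tail hs1, ?_⟩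
      rw [mem_sFun]
      refine Or.inl ⟨?_, ?_⟩
      · rw [Finset.mem_compl]
        simp only [mem_insert, mem_singleton]
        rintro (rfl | rfl)
        · have := b.isLt; omega
        · omega
      · rw [compl_compl]
        exact Or.inr ⟨hcL', a, b, hab2, hbn, Or.inl rfl⟩

lemma reachmap_univ (hn : 4 ≤ n) {v : Finset (Fin n)} (hv : v.card ≤ n - 3) :
    reachmap sFun v = Set.univ := by
  have h3 : 3 ≤ vᶜ.card := by
    rw [Finset.card_compl]
    have := Finset.card_le_univ v
    simp only [Fintype.card_fin] at *
    omega
  ext c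
  simp only [Set.mem_univ, iff_true]
  exact cover hn h3 c

lemma stepN_card {s : Finset (Fin n) → Finset (Fin n)} :
    ∀ k : ℕ, ∀ v u : Finset (Fin n), USO.StepN s k v u → u.card ≤ v.card + k := by
  intro k
  induction k with
  | zero =>
    intro v u h
    have h' : v = u := h
    subst h'
    omega
  | succ k ih =>
    intro v u h
    obtain ⟨w, ⟨j, _, rfl⟩, hrest⟩ := h
    have h1 : (symmDiff v {j}).card ≤ v.card + 1 := by
      have hsub : symmDiff v {j} ⊆ v ∪ {j} := symmDiff_le_sup
      calc (symmDiff v {j}).card ≤ (v ∪ {j}).card := Finset.card_le_card hsub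
        _ ≤ v.card + ({j} : Finset (Fin n)).card := Finset.card_union_le _ _
        _ = v.card + 1 := by rw [card_singleton]
    have := ih _ _ hrest
    omega

lemma sFun_empty_ne (hn : 4 ≤ n) : sFun (∅ : Finset (Fin n)) ≠ ∅ := by
  have h0 : (⟨0, by omega⟩ : Fin n) ∈ sFun (∅ : Finset (Fin n)) := by
    rw [mem_sFun]
    refine Or.inr ⟨by simp, ?_⟩
    apply not_revM_of_card
    rw [Finset.compl_empty, Finset.card_univ, Fintype.card_fin]
    omega
  exact fun h => by rw [h] at h0; simp at h0

lemma notNice (hn : 4 ≤ n) {i : ℕ} (hi : i < n - 2) : ¬ IsNice i (sFun (n := n)) := by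
  intro hN
  obtain ⟨u, ⟨k, hk, hstep⟩, hsub⟩ := hN ∅ (sFun_empty_ne hn)
  have hcu : u.card ≤ n - 3 := by
    have := stepN_card k ∅ u hstep
    simp only [Finset.card_empty] at this
    omega
  have h1 : reachmap sFun u = Set.univ := reachmap_univ hn hcu
  have h2 : reachmap sFun (∅ : Finset (Fin n)) = Set.univ :=
    reachmap_univ hn (by simp)
  rw [h1, h2] at hsub
  exact (lt_irrefl _ hsub)

end NN


/-- for every n ≥ 4 there is an acyclic USO in which every vertex of
Hamming weight at most n−3 has full reachmap; in particular it is not i-nice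
for any i < n−2. -/
theorem exists_auso_not_nice (n : ℕ) (hn : 4 ≤ n) :
    ∃ s : Finset (Fin n) → Finset (Fin n),
      IsUSO s ∧ IsAcyclic s ∧
      (∀ v : Finset (Fin n), v.card ≤ n - 3 → reachmap s v = Set.univ) ∧
      ∀ i, i < n - 2 → ¬ IsNice i s := by
  exact ⟨NN.sFun, NN.isUSO hn, NN.isAcyclic hn,
    fun v hv => NN.reachmap_univ hn hv, fun i hi => NN.notNice hn hi⟩
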